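/- Let X, Y, Z be distinguished triangles in C and let φ = (φ₁, φ₂, φ₃) : X → Y and ψ = (ψ₁, ψ₂, ψ₃) : Y → Z be morphisms of triangles. If each φᵢ is an isomorphism, then the morphism (φ₂ ⊕ 1_{Z₁}, φ₃ ⊕ 1_{Z₂}, φ₁⟦1⟧ ⊕ 1_{Z₃}) from the mapping cone C(ψ ∘ φ) to the mapping cone C(ψ) is an isomorphism of triangles; in particular C(ψ ∘ φ) ≅ C(ψ). -/

import Mathlib

open CategoryTheory CategoryTheory.Limits CategoryTheory.Pretriangulated ZeroObject

variable {C : Type*} [Category C] [Preadditive C] [HasZeroObject C] [HasBinaryBiproducts C]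
  [HasShift C ℤ] [∀ n : ℤ, (shiftFunctor C n).Additive] [Pretriangulated C]

/-- The direct sum of two triangles: the triangle on the biproducts of the corresponding
objects, with the componentwise maps. -/
noncomputable def triangleSum (T T' : Triangle C) : Triangle C :=
  Triangle.mk (biprod.map T.mor₁ T'.mor₁) (biprod.map T.mor₂ T'.mor₂)
    (biprod.desc (T.mor₃ ≫ (biprod.inl : T.obj₁ ⟶ T.obj₁ ⊞ T'.obj₁)⟦(1:ℤ)⟧')
      (T'.mor₃ ≫ (biprod.inr : T'.obj₁ ⟶ T.obj₁ ⊞ T'.obj₁)⟦(1:ℤ)⟧'))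

/-- The mapping cone of a morphism of triangles `φ : T₁ ⟶ T₂`: the triangle with objects
`T₁.obj₂ ⊞ T₂.obj₁`, `T₁.obj₃ ⊞ T₂.obj₂`, `T₁.obj₁⟦1⟧ ⊞ T₂.obj₃` and maps given in matrix
form by `[[-f₂, 0], [φ₂, g₁]]`, `[[-f₃, 0], [φ₃, g₂]]`, `[[-f₁⟦1⟧, 0], [φ₁⟦1⟧, g₃]]`. -/
noncomputable def triangleCone {T₁ T₂ : Triangle C} (φ : T₁ ⟶ T₂) : Triangle C :=
  Triangle.mk
    (biprod.desc (biprod.lift (-T₁.mor₂) φ.hom₂) (biprod.lift 0 T₂.mor₁))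
    (biprod.desc (biprod.lift (-T₁.mor₃) φ.hom₃) (biprod.lift 0 T₂.mor₂))
    (biprod.desc ((biprod.lift (-T₁.mor₁) φ.hom₁ : T₁.obj₁ ⟶ T₁.obj₂ ⊞ T₂.obj₁)⟦(1:ℤ)⟧')
      (T₂.mor₃ ≫ (biprod.inr : T₂.obj₁ ⟶ T₁.obj₂ ⊞ T₂.obj₁)⟦(1:ℤ)⟧'))

/-- A triangle is contractible if its identity morphism is null-homotopic. -/
def triangleContractible (T : Triangle C) : Prop :=
  ∃ (h₁ : T.obj₂ ⟶ T.obj₁) (h₂ : T.obj₃ ⟶ T.obj₂) (h₃ : T.obj₁⟦(1:ℤ)⟧ ⟶ T.obj₃),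
    𝟙 T.obj₂ = h₁ ≫ T.mor₁ + T.mor₂ ≫ h₂ ∧
    𝟙 T.obj₃ = h₂ ≫ T.mor₂ + T.mor₃ ≫ h₃ ∧
    𝟙 (T.obj₁⟦(1:ℤ)⟧) = (T.mor₁ ≫ h₁)⟦(1:ℤ)⟧' + h₃ ≫ T.mor₃

lemma biprod.isIso_map {D : Type*} [Category D] [HasZeroMorphisms D] [HasBinaryBiproducts D]
    {W X Y Z : D} (f : W ⟶ Y) (g : X ⟶ Z) [IsIso f] [IsIso g] : IsIso (biprod.map f g) :=
  (biprod.mapIso (asIso f) (asIso g)).isIso_hom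

section ConeComp

variable {T₁ T₂ T₃ : Triangle C} (φ : T₁ ⟶ T₂) (ψ : T₂ ⟶ T₃)

noncomputable def triangleConeCompMap : triangleCone (φ ≫ ψ) ⟶ triangleCone ψ :=
  Triangle.homMk _ _ (biprod.map φ.hom₂ (𝟙 _)) (biprod.map φ.hom₃ (𝟙 _))
    (biprod.map (φ.hom₁⟦(1:ℤ)⟧') (𝟙 _))
    (by dsimp [triangleCone, Triangle.mk]; ext <;> simp [φ.comm₂])
    (by dsimp [triangleCone, Triangle.mk]; ext <;> simp [φ.comm₃])
    (by
      dsimp [triangleCone, Triangle.mk]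
      ext
      · simp only [biprod.inl_map_assoc, biprod.inl_desc, biprod.inl_desc_assoc,
          ← Functor.map_comp]
        congr 1
        ext <;> simp [φ.comm₁]
      · simp [← Functor.map_comp])

omit [HasZeroObject C] [∀ n : ℤ, (shiftFunctor C n).Additive] [Pretriangulated C] in
lemma isIso_triangleConeCompMap [IsIso φ.hom₁] [IsIso φ.hom₂] [IsIso φ.hom₃] :
    IsIso (triangleConeCompMap φ ψ) :=
  Triangle.isIso_of_isIsos _ (biprod.isIso_map _ _) (biprod.isIso_map _ _) (biprod.isIso_map _ _)

end ConeComp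

theorem stmt5_general {T₁ T₂ T₃ : Triangle C} (φ : T₁ ⟶ T₂) (ψ : T₂ ⟶ T₃)
    (h₁ : IsIso φ.hom₁) (h₂ : IsIso φ.hom₂) (h₃ : IsIso φ.hom₃) :
    ∃ e : triangleCone (φ ≫ ψ) ≅ triangleCone ψ,
      e.hom.hom₁ = biprod.map φ.hom₂ (𝟙 T₃.obj₁) ∧
      e.hom.hom₂ = biprod.map φ.hom₃ (𝟙 T₃.obj₂) ∧
      e.hom.hom₃ = biprod.map (φ.hom₁⟦(1:ℤ)⟧') (𝟙 T₃.obj₃) :=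
  haveI := isIso_triangleConeCompMap φ ψ
  ⟨asIso (triangleConeCompMap φ ψ), rfl, rfl, rfl⟩

/-- Given morphisms of distinguished triangles `φ : T₁ ⟶ T₂` and `ψ : T₂ ⟶ T₃` such that all
components of `φ` are isomorphisms, the morphism `(φ₂ ⊞ 𝟙, φ₃ ⊞ 𝟙, φ₁⟦1⟧ ⊞ 𝟙)` from the
mapping cone of `ψ ∘ φ` to the mapping cone of `ψ` is an isomorphism of triangles. -/
theorem stmt5 {T₁ T₂ T₃ : Triangle C} (hT₁ : T₁ ∈ distTriang C) (hT₂ : T₂ ∈ distTriang C)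
    (hT₃ : T₃ ∈ distTriang C) (φ : T₁ ⟶ T₂) (ψ : T₂ ⟶ T₃)
    (h₁ : IsIso φ.hom₁) (h₂ : IsIso φ.hom₂) (h₃ : IsIso φ.hom₃) :
    ∃ e : triangleCone (φ ≫ ψ) ≅ triangleCone ψ,
      e.hom.hom₁ = biprod.map φ.hom₂ (𝟙 T₃.obj₁) ∧
      e.hom.hom₂ = biprod.map φ.hom₃ (𝟙 T₃.obj₂) ∧
      e.hom.hom₃ = biprod.map (φ.hom₁⟦(1:ℤ)⟧') (𝟙 T₃.obj₃) :=
  stmt5_general φ ψ h₁ h₂ h₃
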